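/- There exist d̃ > 0 and M > 0 such that for every d ∈ (0, d̃), every δ > 0 and every p ∈ Ω with closure(B_δ(p)) ⊂ Ω and B_δ(p) ⊂ V_{d/4}, with coordinates normalized for p (so p = (0, p_y)), the set Top_{M,δ,d}(p) := {(x, p_y + δ + (3/2)d) : M x² ≤ (3/2)d} is contained in V_{2d} ∖ V_d; that is, every point z ∈ Top_{M,δ,d}(p) lies in Ω and satisfies d ≤ dist(z, ∂Ω) < 2d. -/

import Mathlib

open MeasureTheory Metric Set
open scoped InnerProductSpace

noncomputable section

abbrev E2 := EuclideanSpace ℝ (Fin 2)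

/-- The point `(a, b) ∈ ℝ²`. -/
def pt (a b : ℝ) : E2 := WithLp.toLp 2 ![a, b]

/-- The standard basis vector `e₁ = (1,0)`. -/
def e1v : E2 := EuclideanSpace.single 0 1

/-- The standard basis vector `e₂ = (0,1)`. -/
def e2v : E2 := EuclideanSpace.single 1 1

/-- The Laplacian `Δu = ∂²u/∂x² + ∂²u/∂y²`. -/
noncomputable def lap (u : E2 → ℝ) (z : E2) : ℝ :=
  fderiv ℝ (fun w => fderiv ℝ u w e1v) z e1v + fderiv ℝ (fun w => fderiv ℝ u w e2v) z e2v

/-- `Ω` has `C²` boundary: every boundary point has an open neighborhood in which,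
after a rigid motion, `Ω` coincides with the strict epigraph of a `C²` function. -/
def HasC2Boundary (Ω : Set E2) : Prop :=
  ∀ z ∈ frontier Ω, ∃ (φ : E2 ≃ᵢ E2) (f : ℝ → ℝ) (V : Set E2),
    ContDiff ℝ 2 f ∧ IsOpen V ∧ z ∈ V ∧ ∀ w ∈ V, (w ∈ Ω ↔ f (φ w 0) < φ w 1)

/-- `dist_min(A, B) = inf {dist(a, B) : a ∈ A}`. -/
noncomputable def distMin (A B : Set E2) : ℝ := sInf ((fun a => infDist a B) '' A)

/-- The tubular neighbourhood `V_d = {x ∈ Ω : dist(x, ∂Ω) < d}`. -/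
def tub (Ω : Set E2) (d : ℝ) : Set E2 := {x ∈ Ω | infDist x (frontier Ω) < d}

/-- A first eigenpair `(λ, u)` of the open set `U`. -/
def IsFirstEigenpair (U : Set E2) (lam : ℝ) (u : E2 → ℝ) : Prop :=
  0 < lam ∧ Continuous u ∧ (∀ x, x ∉ U → u x = 0) ∧
  ContDiffOn ℝ (⊤ : ℕ∞) u U ∧ (∀ x ∈ U, 0 < u x) ∧
  (∀ x ∈ U, lap u x = -lam * u x) ∧ (∫ x, (u x) ^ 2) = 1

/-- `G` is a continuous extension of `∇u` from `U` to `U ∪ S`. -/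
def GradExt (U : Set E2) (u : E2 → ℝ) (S : Set E2) (G : E2 → E2) : Prop :=
  ContinuousOn G (U ∪ S) ∧ ∀ x ∈ U, G x = gradient u x

/-- Coordinates are normalized for `p`: `0 ∈ ∂Ω` is a nearest point of `∂Ω` to `p`,
the inner unit normal of `∂Ω` at `0` is `e₂` (near `0`, `Ω` is the strict epigraph
of a `C²` function `f` with `f 0 = 0` and `f' 0 = 0`), and `p = (0, d + δ)` where
`d = dist_min(∂Ω, B_δ(p))`. -/
def NormalizedCoords (Ω : Set E2) (p : E2) (δ : ℝ) : Prop :=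
  (0 : E2) ∈ frontier Ω ∧
  infDist p (frontier Ω) = dist p (0 : E2) ∧
  p 0 = 0 ∧ p 1 = distMin (frontier Ω) (ball p δ) + δ ∧
  ∃ (f : ℝ → ℝ) (V : Set E2), ContDiff ℝ 2 f ∧ f 0 = 0 ∧ deriv f 0 = 0 ∧
    IsOpen V ∧ (0 : E2) ∈ V ∧ ∀ w ∈ V, (w ∈ Ω ↔ f (w 0) < w 1)

/-- The outer unit normal of `∂B_δ(p)` at `z`: `ν(z) = (z - p)/δ`. -/
def nuv (p : E2) (δ : ℝ) (z : E2) : E2 := δ⁻¹ • (z - p)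

/-!
Near the origin `∂Ω` is the graph of the chart function `f`, and `|f s| ≤ C s²`. A point `(0, a)`
with `2aC ≤ 1` is at distance at least `a` from such a graph, while the apex `(0, p₂ + δ)` of the
ball is within `d/4` of `∂Ω`; hence `p₂ + δ ≤ d/4` and the top segment lies at heights in
`[3d/2, 7d/4]`, with `|x| ≲ √(d/C)`. Its points are within `2d` of the graph point below them.
A boundary point lower than `h - d` is vertically at distance `≥ d`; a higher one has
`C s² > d/2`, which for `d ≤ 1/(8C)` puts it horizontally at distance `≥ d`.
-/

open Filter Topology

@[simp] lemma pt_apply_zero (a b : ℝ) : pt a b 0 = a := rfl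
@[simp] lemma pt_apply_one (a b : ℝ) : pt a b 1 = b := rfl

lemma pt_zero_zero : pt 0 0 = 0 := by
  ext i; fin_cases i <;> rfl

lemma dist_eq_sqrt (w v : E2) : dist w v = √((w 0 - v 0) ^ 2 + (w 1 - v 1) ^ 2) := by
  simp [EuclideanSpace.dist_eq, Fin.sum_univ_two, Real.dist_eq, sq_abs]

lemma abs_sub_apply_le_dist (w v : E2) (i : Fin 2) : |w i - v i| ≤ dist w v :=
  PiLp.dist_apply_le w v i

lemma dist_pt_pt_same_fst (x a b : ℝ) : dist (pt x a) (pt x b) = |a - b| := by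
  simp [dist_eq_sqrt, Real.sqrt_sq_eq_abs]

lemma continuous_pt_snd (x : ℝ) : Continuous (pt x) := by
  unfold pt; fun_prop

lemma exists_abs_le_mul_sq_of_contDiffAt {f : ℝ → ℝ} (hf : ContDiffAt ℝ 2 f 0) (hf0 : f 0 = 0)
    (hf'0 : deriv f 0 = 0) : ∃ C, ∃ ρ > 0, ∀ s, |s| < ρ → |f s| ≤ C * s ^ 2 := by
  obtain ⟨f', ⟨u, hu, hff'⟩, hf'⟩ :=
    contDiffAt_succ_iff_hasFDerivAt.mp (show ContDiffAt ℝ ((1 : ℕ) + 1) f 0 from hf)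
  have hf'0 : f' 0 = 0 := by
    ext
    simpa [hf'0] using ((hff' 0 (mem_of_mem_nhds hu)).hasDerivAt.deriv).symm
  obtain ⟨K, t, ht, hK⟩ := hf'.exists_lipschitzOnWith
  obtain ⟨ρ, hρ, hρut⟩ := Metric.mem_nhds_iff.mp (Filter.inter_mem hu ht)
  refine ⟨K, ρ, hρ, fun s hs => ?_⟩
  have hsub : closedBall (0 : ℝ) |s| ⊆ ball 0 ρ := closedBall_subset_ball (by simpa using hs)
  have hbound : ∀ y ∈ closedBall (0 : ℝ) |s|, ‖f' y‖ ≤ K * |s| := by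
    intro y hy
    have := hK.norm_sub_le (hρut (hsub hy)).2 (hρut (hsub (mem_closedBall_self (abs_nonneg s)))).2
    simp only [hf'0, sub_zero] at this
    exact this.trans (by gcongr; simpa using hy)
  have := (convex_closedBall (0 : ℝ) |s|).norm_image_sub_le_of_norm_hasFDerivWithin_le
    (fun y hy => (hff' y (hρut (hsub hy)).1).hasFDerivWithinAt) hbound
    (mem_closedBall_self (abs_nonneg s)) (y := s) (by simp)
  simpa [hf0, mul_assoc, ← sq] using this

section Chart

variable {Ω V : Set E2} {f : ℝ → ℝ}

lemma apply_one_eq_of_mem_frontier (hV : IsOpen V) (hf : Continuous f)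
    (hΩ : ∀ w ∈ V, w ∈ Ω ↔ f (w 0) < w 1) {b : E2} (hb : b ∈ frontier Ω) (hbV : b ∈ V) :
    b 1 = f (b 0) := by
  rcases lt_trichotomy (b 1) (f (b 0)) with hlt | heq | hgt
  · have hopen : IsOpen (V ∩ {w : E2 | w 1 < f (w 0)}) :=
      hV.inter (isOpen_lt (by fun_prop) (by fun_prop))
    obtain ⟨w, ⟨hwV, hw⟩, hwΩ⟩ := mem_closure_iff.mp hb.1 _ hopen ⟨hbV, hlt⟩
    exact absurd ((hΩ w hwV).mp hwΩ) hw.not_gt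
  · exact heq
  · have hopen : IsOpen (V ∩ {w : E2 | f (w 0) < w 1}) :=
      hV.inter (isOpen_lt (by fun_prop) (by fun_prop))
    have hsub : V ∩ {w : E2 | f (w 0) < w 1} ⊆ interior Ω :=
      interior_maximal (fun w hw => (hΩ w hw.1).mpr hw.2) hopen
    exact absurd (hsub ⟨hbV, hgt⟩) hb.2

lemma pt_mem_frontier (hV : IsOpen V) (hΩ : ∀ w ∈ V, w ∈ Ω ↔ f (w 0) < w 1) {s : ℝ}
    (hs : pt s (f s) ∈ V) : pt s (f s) ∈ frontier Ω := by
  refine ⟨?_, fun h => lt_irrefl _ ((hΩ _ hs).mp (interior_subset h))⟩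
  have hlim : Tendsto (fun t => pt s (f s + t)) (𝓝[>] 0) (𝓝 (pt s (f s))) :=
    ((continuous_pt_snd s).comp (continuous_const_add (f s))).tendsto' 0 _ (by simp)
      |>.mono_left nhdsWithin_le_nhds
  refine mem_closure_of_tendsto hlim ?_
  filter_upwards [hlim.eventually_mem (hV.mem_nhds hs), self_mem_nhdsWithin] with t htV ht
  exact (hΩ _ htV).mpr (by simpa using ht)

end Chart

section Estimates

variable {Ω : Set E2} {f : ℝ → ℝ} {r C : ℝ}

lemma le_dist_pt_zero_of_mem_frontier (hf : Continuous f)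
    (hΩ : ∀ w ∈ ball (0 : E2) r, w ∈ Ω ↔ f (w 0) < w 1) (hfC : ∀ s, |s| < r → f s ≤ C * s ^ 2)
    {a : ℝ} (ha : 0 < a) (haC : 2 * a * C ≤ 1) (har : 2 * a ≤ r) {b : E2}
    (hb : b ∈ frontier Ω) : a ≤ dist (pt 0 a) b := by
  by_cases hbr : b ∈ ball (0 : E2) r
  · have hb1 := apply_one_eq_of_mem_frontier isOpen_ball hf hΩ hb hbr
    have hfb := hfC (b 0) (by simpa using (abs_sub_apply_le_dist b 0 0).trans_lt hbr)
    rw [dist_eq_sqrt, Real.le_sqrt ha.le (by positivity)]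
    simp only [pt_apply_zero, pt_apply_one, hb1]
    nlinarith [mul_le_mul_of_nonneg_left hfb (by positivity : (0 : ℝ) ≤ 2 * a),
      mul_nonneg (sub_nonneg.2 haC) (sq_nonneg (b 0))]
  · have hpa : dist (pt 0 a) 0 = a := by
      rw [← pt_zero_zero, dist_pt_pt_same_fst, sub_zero, abs_of_pos ha]
    have := dist_triangle b (pt 0 a) 0
    rw [mem_ball, not_lt] at hbr
    linarith [dist_comm b (pt 0 a)]

lemma le_dist_pt_of_mem_frontier (hf : Continuous f)
    (hΩ : ∀ w ∈ ball (0 : E2) r, w ∈ Ω ↔ f (w 0) < w 1) (hfC : ∀ s, |s| < r → f s ≤ C * s ^ 2)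
    {d x h : ℝ} (hd : 0 < d) (hdC : 8 * C * d ≤ 1) (hxC : 16 * C * x ^ 2 ≤ d)
    (hdh : 3 / 2 * d ≤ h) (hzr : dist (pt x h) 0 + d ≤ r) {b : E2} (hb : b ∈ frontier Ω) :
    d ≤ dist (pt x h) b := by
  by_cases hbr : b ∈ ball (0 : E2) r
  · have hb1 := apply_one_eq_of_mem_frontier isOpen_ball hf hΩ hb hbr
    have hfb := hfC (b 0) (by simpa using (abs_sub_apply_le_dist b 0 0).trans_lt hbr)
    by_cases hlow : f (b 0) ≤ h - d
    · calc d ≤ h - b 1 := by linarith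
        _ ≤ dist (pt x h) b := by
          simpa using (le_abs_self _).trans (abs_sub_apply_le_dist (pt x h) b 1)
    · have hb2 : d < 2 * C * b 0 ^ 2 := by linarith
      have hx8 : 8 * x ^ 2 ≤ b 0 ^ 2 := by
        by_contra! hlt
        nlinarith [mul_le_mul_of_nonneg_left hlt.le (by nlinarith : (0 : ℝ) ≤ C)]
      have hb4 : 4 * d ^ 2 ≤ b 0 ^ 2 := by
        nlinarith [mul_le_mul_of_nonneg_right hdC (sq_nonneg (b 0))]
      have hsq : d ^ 2 ≤ (x - b 0) ^ 2 := by nlinarith [sq_nonneg (b 0 - 2 * x)]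
      calc d ≤ |x - b 0| := (le_abs_self d).trans (sq_le_sq.mp hsq)
        _ ≤ dist (pt x h) b := by simpa using abs_sub_apply_le_dist (pt x h) b 0
  · have := dist_triangle b (pt x h) 0
    rw [mem_ball, not_lt] at hbr
    linarith [dist_comm b (pt x h)]

lemma top_point_mem_annulus (hf : Continuous f)
    (hΩ : ∀ w ∈ ball (0 : E2) r, w ∈ Ω ↔ f (w 0) < w 1) (hfC : ∀ s, |s| < r → |f s| ≤ C * s ^ 2)
    (hC : 1 ≤ C) {d x h : ℝ} (hd : 0 < d) (hdC : 8 * C * d ≤ 1) (hdr : 16 * d ≤ r ^ 2)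
    (hdr' : 16 * d ≤ r) (hxC : 16 * C * x ^ 2 ≤ d) (hdh : 3 / 2 * d ≤ h) (hhd : h ≤ 7 / 4 * d) :
    pt x h ∈ Ω ∧ d ≤ infDist (pt x h) (frontier Ω) ∧ infDist (pt x h) (frontier Ω) < 2 * d := by
  have hx : 16 * x ^ 2 ≤ d := by nlinarith [sq_nonneg x]
  have hxr : |x| < r := abs_lt_of_sq_lt_sq (by nlinarith) (by linarith)
  have hfx : |f x| ≤ d / 16 := (hfC x hxr).trans (by linarith)
  have hfx' := abs_le.mp hfx
  have hz0 : dist (pt x h) 0 ≤ r / 2 := by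
    rw [← pt_zero_zero, dist_eq_sqrt, Real.sqrt_le_left (by linarith)]
    simp only [pt_apply_zero, pt_apply_one, sub_zero]
    nlinarith
  have hzΩ : pt x h ∈ Ω := (hΩ _ (mem_ball.mpr (by linarith))).mpr (by simp; linarith)
  have hgraph : pt x (f x) ∈ frontier Ω := by
    refine pt_mem_frontier isOpen_ball hΩ (mem_ball.mpr ?_)
    rw [← pt_zero_zero, dist_eq_sqrt, Real.sqrt_lt' (by linarith)]
    simp only [pt_apply_zero, pt_apply_one, sub_zero]
    nlinarith
  refine ⟨hzΩ, (le_infDist ⟨_, hgraph⟩).2 fun b hb => ?_, ?_⟩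
  · exact le_dist_pt_of_mem_frontier hf hΩ (fun s hs => (le_abs_self _).trans (hfC s hs)) hd hdC
      (by linarith) hdh (by linarith) hb
  · calc infDist (pt x h) (frontier Ω) ≤ dist (pt x h) (pt x (f x)) :=
          infDist_le_dist_of_mem hgraph
      _ = h - f x := by rw [dist_pt_pt_same_fst, abs_of_pos (by linarith)]
      _ < 2 * d := by linarith

lemma apex_height_le (hf : Continuous f)
    (hΩ : ∀ w ∈ ball (0 : E2) r, w ∈ Ω ↔ f (w 0) < w 1) (hfC : ∀ s, |s| < r → f s ≤ C * s ^ 2)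
    (hC : 0 ≤ C) {d δ : ℝ} {p : E2} (hdC : 8 * C * d ≤ 1) (hdr : d ≤ r) (hδ : 0 < δ)
    (hp0 : p 0 = 0) (hδp : δ ≤ p 1) (h0 : (0 : E2) ∈ frontier Ω)
    (hp : infDist p (frontier Ω) = dist p 0) (hball : ball p δ ⊆ tub Ω (d / 4)) :
    p 1 + δ ≤ d / 4 := by
  have hpt : p = pt 0 (p 1) := by
    ext i; fin_cases i
    exacts [hp0, rfl]
  have hp1 : p 1 < d / 4 := by
    have := (hball (mem_ball_self hδ)).2
    rwa [hp, hpt, ← pt_zero_zero, dist_pt_pt_same_fst, sub_zero, abs_of_pos (by linarith)] at this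
  have hapex : infDist (pt 0 (p 1 + δ)) (frontier Ω) ≤ d / 4 := by
    have hcl : closure (ball p δ) ⊆ {y | infDist y (frontier Ω) ≤ d / 4} :=
      closure_minimal (fun y hy => (hball hy).2.le)
        (isClosed_le (continuous_infDist_pt _) continuous_const)
    apply hcl
    rw [closure_ball p hδ.ne', mem_closedBall, hpt, dist_pt_pt_same_fst]
    simp [abs_of_pos hδ]
  have := (le_infDist ⟨0, h0⟩).2 fun b hb =>
    le_dist_pt_zero_of_mem_frontier hf hΩ hfC (a := p 1 + δ) (by linarith)
      (by nlinarith [mul_le_mul_of_nonneg_right (show p 1 + δ ≤ d / 2 by linarith) hC])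
      (by linarith) hb
  linarith

end Estimates

lemma exists_quadratic_chart_ball {Ω V : Set E2} {f : ℝ → ℝ} (hf : ContDiffAt ℝ 2 f 0)
    (hf0 : f 0 = 0) (hf'0 : deriv f 0 = 0) (hV : IsOpen V) (h0V : (0 : E2) ∈ V)
    (hΩ : ∀ w ∈ V, w ∈ Ω ↔ f (w 0) < w 1) :
    ∃ r > 0, ∃ C ≥ 1, (∀ w ∈ ball (0 : E2) r, w ∈ Ω ↔ f (w 0) < w 1) ∧
      ∀ s, |s| < r → |f s| ≤ C * s ^ 2 := by
  obtain ⟨C, ρ, hρ, hfC⟩ := exists_abs_le_mul_sq_of_contDiffAt hf hf0 hf'0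
  obtain ⟨ε, hε, hεV⟩ := Metric.isOpen_iff.mp hV 0 h0V
  refine ⟨min ρ ε, lt_min hρ hε, max C 1, le_max_right _ _,
    fun w hw => hΩ w (hεV (ball_subset_ball (min_le_right _ _) hw)), fun s hs => ?_⟩
  exact (hfC s (hs.trans_le (min_le_left _ _))).trans (by gcongr; exact le_max_left _ _)

theorem statement_5_general (Ω : Set E2) :
    ∃ dt > (0:ℝ), ∃ M > (0:ℝ), ∀ d : ℝ, 0 < d → d < dt →
      ∀ δ : ℝ, 0 < δ → ∀ p : E2, p ∈ Ω → closure (ball p δ) ⊆ Ω →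
        ball p δ ⊆ tub Ω (d/4) → NormalizedCoords Ω p δ →
        ∀ x : ℝ, M * x ^ 2 ≤ 3/2 * d →
          pt x (p 1 + δ + 3/2 * d) ∈ Ω ∧
          d ≤ infDist (pt x (p 1 + δ + 3/2 * d)) (frontier Ω) ∧
          infDist (pt x (p 1 + δ + 3/2 * d)) (frontier Ω) < 2 * d := by
  -- `NormalizedCoords Ω p δ` fixes the chart of `Ω` at the origin independently of `p`
  by_cases hN : ∃ p δ, NormalizedCoords Ω p δ
  swap
  · exact ⟨1, one_pos, 1, one_pos, fun _ _ _ δ _ p _ _ _ hpδ => absurd ⟨p, δ, hpδ⟩ hN⟩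
  obtain ⟨-, -, -, -, -, -, f, V, hf, hf0, hf'0, hV, h0V, hΩV⟩ := hN
  obtain ⟨r, hr, C, hC, hΩ, hfC⟩ := exists_quadratic_chart_ball hf.contDiffAt hf0 hf'0 hV h0V hΩV
  refine ⟨min (1 / (8 * C)) (min (r ^ 2 / 16) (r / 16)), by positivity, 24 * C, by positivity, ?_⟩
  rintro d hd hdt δ hδ p - - hball ⟨h0, hp, hp0, hp1, -⟩ x hx
  have hdC : 8 * C * d ≤ 1 := by
    have := hdt.trans_le (min_le_left _ _)
    rw [lt_div_iff₀ (by positivity)] at this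
    linarith
  have hdr : 16 * d ≤ r ^ 2 := by
    linarith [hdt.trans_le ((min_le_right _ _).trans (min_le_left _ _))]
  have hdr' : 16 * d ≤ r := by
    linarith [hdt.trans_le ((min_le_right _ _).trans (min_le_right _ _))]
  have hδp : δ ≤ p 1 :=
    hp1 ▸ le_add_of_nonneg_left (Real.sInf_nonneg (by rintro _ ⟨a, -, rfl⟩; exact infDist_nonneg))
  have hapex := apex_height_le hf.continuous hΩ (fun s hs => (le_abs_self _).trans (hfC s hs))
    (by linarith) hdC (by linarith) hδ hp0 hδp h0 hp hball
  exact top_point_mem_annulus hf.continuous hΩ hfC hC hd hdC hdr hdr' (by linarith) (by linarith)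
    (by linarith)

theorem statement_5 (Ω : Set E2) (hΩb : Bornology.IsBounded Ω) (hΩo : IsOpen Ω)
    (hΩc : IsConnected Ω) (hΩ2 : HasC2Boundary Ω) :
    ∃ dt > (0:ℝ), ∃ M > (0:ℝ), ∀ d : ℝ, 0 < d → d < dt →
      ∀ δ : ℝ, 0 < δ → ∀ p : E2, p ∈ Ω → closure (ball p δ) ⊆ Ω →
        ball p δ ⊆ tub Ω (d/4) → NormalizedCoords Ω p δ →
        ∀ x : ℝ, M * x ^ 2 ≤ 3/2 * d →
          pt x (p 1 + δ + 3/2 * d) ∈ Ω ∧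
          d ≤ infDist (pt x (p 1 + δ + 3/2 * d)) (frontier Ω) ∧
          infDist (pt x (p 1 + δ + 3/2 * d)) (frontier Ω) < 2 * d :=
  statement_5_general Ω
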